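/- arXiv:1402.4790 — 2 statements merged into one kernel-verified Lean document; each statement's English description precedes it below -/
import Mathlib

section
/- Let F be a finite field of cardinality c, let m, n be positive integers, and let A ∈ M_{m×n}(F) be a matrix of rank r with r ≥ 2. Then there exists an adjacent set V ⊆ M_{m×n}(F) of cardinality c^{r−1} all of whose elements have rank r−1 and are adjacent to A. -/
open Matrix

variable {D : Type*} [DivisionRing D]

/-- The rank of a matrix over a division ring: the dimension of its row space,
i.e. of the left `D`-subspace of `D^n` spanned by the rows. -/
noncomputable def rowRank {m n : ℕ} (A : Matrix (Fin m) (Fin n) D) : ℕ :=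
  Module.finrank D (Submodule.span D (Set.range fun i => A i))

/-- Two matrices are adjacent if their difference has rank one. -/
def Adjacent {m n : ℕ} (A B : Matrix (Fin m) (Fin n) D) : Prop :=
  rowRank (A - B) = 1

/-- `R(x)`: the set of matrices of the form `ᵗu x` for a fixed row vector `x`. -/
def Rvec {m n : ℕ} (x : Fin n → D) : Set (Matrix (Fin m) (Fin n) D) :=
  { M | ∃ u : Fin m → D, ∀ i j, M i j = u i * x j }

/-- `L(ᵗy)`: the set of matrices of the form `ᵗy v` for a fixed column vector `ᵗy`. -/
def Lvec {m n : ℕ} (y : Fin m → D) : Set (Matrix (Fin m) (Fin n) D) :=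
  { M | ∃ v : Fin n → D, ∀ i j, M i j = y i * v j }

/-- `R_d`: the matrices whose row space is contained in `d`. -/
def Rsub {m n : ℕ} (d : Submodule D (Fin n → D)) : Set (Matrix (Fin m) (Fin n) D) :=
  { M | ∀ i, M i ∈ d }

/-- `L_e`: the matrices whose column space (a right subspace, i.e. a `Dᵐᵒᵖ`-submodule)
is contained in `e`. -/
def Lsub {m n : ℕ} (e : Submodule Dᵐᵒᵖ (Fin m → D)) : Set (Matrix (Fin m) (Fin n) D) :=
  { M | ∀ j, (fun i => M i j) ∈ e }

/-- The orthogonal set of a set `e` of column vectors. -/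
def perpSet {m : ℕ} (e : Set (Fin m → D)) : Set (Fin m → D) :=
  { u | ∀ v ∈ e, ∑ i, u i * v i = 0 }

/-- The `p × q` matrix with upper-left block `B` and zeros elsewhere. -/
def pad {m n : ℕ} (p q : ℕ) (B : Matrix (Fin m) (Fin n) D) :
    Matrix (Fin p) (Fin q) D :=
  Matrix.of fun i j =>
    if hi : (i : ℕ) < m then if hj : (j : ℕ) < n then B ⟨i, hi⟩ ⟨j, hj⟩ else 0 else 0

/-- `φ` is degenerate with respect to `A`. -/
def DegenerateAt {m n p q : ℕ} (φ : Matrix (Fin m) (Fin n) D → Matrix (Fin p) (Fin q) D)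
    (A : Matrix (Fin m) (Fin n) D) : Prop :=
  ∃ x : Fin p → D, x ≠ 0 ∧ ∃ y : Fin q → D, y ≠ 0 ∧
    ∀ M : Matrix (Fin m) (Fin n) D, rowRank M ≤ 1 →
      φ (A + M) - φ A ∈ Rvec y ∪ Lvec x

/-- `φ` is degenerate: degenerate with respect to every matrix. -/
def Degenerate {m n p q : ℕ} (φ : Matrix (Fin m) (Fin n) D → Matrix (Fin p) (Fin q) D) :
    Prop :=
  ∀ A, DegenerateAt φ A

/-- A map (sending `0` to `0`) is degenerate with respect to `0` iff it maps every matrix of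
rank at most one into `R(y) ∪ L(ᵗx)` for some nonzero `y`, `x`. -/
def DegZero {m n p q : ℕ} (φ : Matrix (Fin m) (Fin n) D → Matrix (Fin p) (Fin q) D) :
    Prop :=
  ∃ x : Fin p → D, x ≠ 0 ∧ ∃ y : Fin q → D, y ≠ 0 ∧
    ∀ M : Matrix (Fin m) (Fin n) D, rowRank M ≤ 1 → φ M ∈ Rvec y ∪ Lvec x

/-- A standard adjacency preserver. -/
def Standard {m n p q : ℕ} (φ : Matrix (Fin m) (Fin n) D → Matrix (Fin p) (Fin q) D) :
    Prop :=
  (m ≤ p ∧ n ≤ q ∧ ∃ τ : D ≃+* D, ∃ T : Matrix (Fin p) (Fin p) D,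
    ∃ S : Matrix (Fin q) (Fin q) D, ∃ R : Matrix (Fin p) (Fin q) D,
    IsUnit T ∧ IsUnit S ∧ ∀ A, φ A = T * pad p q (A.map τ) * S + R) ∨
  (n ≤ p ∧ m ≤ q ∧ ∃ σ : D → D, Function.Bijective σ ∧ σ 1 = 1 ∧
    (∀ a b, σ (a + b) = σ a + σ b) ∧ (∀ a b, σ (a * b) = σ b * σ a) ∧
    ∃ T : Matrix (Fin p) (Fin p) D, ∃ S : Matrix (Fin q) (Fin q) D,
    ∃ R : Matrix (Fin p) (Fin q) D, IsUnit T ∧ IsUnit S ∧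
    ∀ A, φ A = T * pad p q (A.map σ).transpose * S + R)

/-- A division ring is EAS if every (unital) ring endomorphism of it is surjective. -/
def EAS (D : Type*) [DivisionRing D] : Prop :=
  ∀ f : D →+* D, Function.Surjective f

/-- A set of matrices is adjacent if any two distinct members are adjacent. -/
def IsAdjacentSet {m n : ℕ} (S : Set (Matrix (Fin m) (Fin n) D)) : Prop :=
  ∀ A ∈ S, ∀ B ∈ S, A ≠ B → Adjacent A B

/-!
Split the row space of `A` as `W ⊕ ⟨x⟩` with `W` a hyperplane, so that every row is
`A i = c i • x + (an element of W)` with `c ≠ 0`. The matrices `A + c ⊗ (w - x)`, `w ∈ W`, have all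
their rows in `W`, differ pairwise by `c ⊗ (w - w')` and from `A` by `c ⊗ (w - x)`; subadditivity of
the rank then pins their rank to exactly `rank A - 1`.
-/

section

variable {m n : ℕ}

lemma rowRank_le_finrank_of_forall_mem {M : Matrix (Fin m) (Fin n) D}
    {W : Submodule D (Fin n → D)} (hM : ∀ i, M i ∈ W) : rowRank M ≤ Module.finrank D W :=
  Submodule.finrank_mono (Submodule.span_le.mpr (Set.range_subset_iff.mpr hM))

lemma rowRank_add_le (A B : Matrix (Fin m) (Fin n) D) :
    rowRank (A + B) ≤ rowRank A + rowRank B := by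
  have hle : Submodule.span D (Set.range fun i => (A + B) i) ≤
      Submodule.span D (Set.range fun i => A i) ⊔ Submodule.span D (Set.range fun i => B i) :=
    Submodule.span_le.mpr <| Set.range_subset_iff.mpr fun i =>
      Submodule.add_mem_sup (Submodule.subset_span ⟨i, rfl⟩) (Submodule.subset_span ⟨i, rfl⟩)
  exact (Submodule.finrank_mono hle).trans (Submodule.finrank_add_le_finrank_add_finrank _ _)

lemma rowRank_vecMulVec {u : Fin m → D} {v : Fin n → D} (hu : u ≠ 0) (hv : v ≠ 0) :
    rowRank (vecMulVec u v) = 1 := by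
  obtain ⟨i, hi⟩ := Function.ne_iff.mp hu
  have hspan : Submodule.span D (Set.range fun i => vecMulVec u v i) = D ∙ v := by
    refine le_antisymm (Submodule.span_le.mpr <| Set.range_subset_iff.mpr fun k =>
      Submodule.mem_span_singleton.mpr ⟨u k, rfl⟩) ?_
    rw [Submodule.span_singleton_le_iff_mem]
    have hrow : (u i)⁻¹ • vecMulVec u v i = v := by
      rw [show vecMulVec u v i = u i • v from rfl, smul_smul, inv_mul_cancel₀ hi, one_smul]
    simpa only [hrow] using
      Submodule.smul_mem (Submodule.span D (Set.range fun k => vecMulVec u v k)) (u i)⁻¹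
        (Submodule.subset_span ⟨i, rfl⟩)
  rw [rowRank, hspan, finrank_span_singleton hv]

lemma exists_hyperplane_of_rowRank_eq_succ {A : Matrix (Fin m) (Fin n) D} {k : ℕ}
    (hA : rowRank A = k + 1) :
    ∃ (W : Submodule D (Fin n → D)) (x : Fin n → D) (c : Fin m → D),
      Module.finrank D W = k ∧ x ∉ W ∧ ∀ i, A i - c i • x ∈ W := by
  set R := Submodule.span D (Set.range fun i => A i)
  let B : Module.Basis (Fin (k + 1)) D R := Module.finBasisOfFinrankEq D R hA
  let f := B.coord 0
  have hf : f (B 0) = 1 := by simp [f]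
  have hf_range : LinearMap.range f = ⊤ :=
    LinearMap.range_eq_top.mpr fun a => ⟨a • B 0, by simp [hf]⟩
  refine ⟨(LinearMap.ker f).map R.subtype, B 0, fun i => f ⟨A i, Submodule.subset_span ⟨i, rfl⟩⟩,
    ?_, ?_, fun i => ?_⟩
  · have := LinearMap.finrank_range_add_finrank_ker f
    rw [hf_range, finrank_top, Module.finrank_self, Module.finrank_eq_card_basis B,
      Fintype.card_fin] at this
    rw [Submodule.finrank_map_subtype_eq]
    omega
  · rintro ⟨y, hy, hyx⟩
    obtain rfl : y = B 0 := Subtype.ext hyx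
    simp [hf] at hy
  · exact ⟨⟨A i, Submodule.subset_span ⟨i, rfl⟩⟩ - f ⟨A i, Submodule.subset_span ⟨i, rfl⟩⟩ • B 0,
      by simp [hf], by simp⟩

lemma rowRank_add_vecMulVec_sub_of_mem {A : Matrix (Fin m) (Fin n) D} {k : ℕ}
    (hA : rowRank A = k + 1) {W : Submodule D (Fin n → D)} (hW : Module.finrank D W = k)
    {x : Fin n → D} (hx : x ∉ W) {c : Fin m → D} (hc0 : c ≠ 0) (hc : ∀ i, A i - c i • x ∈ W)
    {w : Fin n → D} (hw : w ∈ W) :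
    rowRank (A + vecMulVec c (w - x)) = k := by
  apply le_antisymm
  · refine hW ▸ rowRank_le_finrank_of_forall_mem fun i => ?_
    convert W.add_mem (hc i) (W.smul_mem (c i) hw) using 1
    ext j
    simp only [Matrix.add_apply, vecMulVec_apply, Pi.add_apply, Pi.sub_apply, Pi.smul_apply,
      smul_eq_mul, mul_sub]
    abel
  · have hA_eq : A + vecMulVec c (w - x) + vecMulVec c (x - w) = A := by
      simp only [vecMulVec_sub]
      abel
    have := rowRank_add_le (A + vecMulVec c (w - x)) (vecMulVec c (x - w))
    rw [hA_eq, hA, rowRank_vecMulVec hc0 (sub_ne_zero.mpr fun h => hx (by rwa [h]))] at this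
    omega

theorem exists_adjacentSet_of_rowRank_eq_succ [Fintype D] {A : Matrix (Fin m) (Fin n) D} {k : ℕ}
    (hA : rowRank A = k + 1) :
    ∃ V : Set (Matrix (Fin m) (Fin n) D),
      IsAdjacentSet V ∧ V.ncard = Fintype.card D ^ k ∧
      ∀ M ∈ V, rowRank M = k ∧ Adjacent M A := by
  obtain ⟨W, x, c, hW, hx, hc⟩ := exists_hyperplane_of_rowRank_eq_succ hA
  have hc0 : c ≠ 0 := by
    rintro rfl
    have := rowRank_le_finrank_of_forall_mem (W := W) (by simpa using hc)
    omega
  have hx_ne : ∀ w : W, (w : Fin n → D) ≠ x := fun w h => hx (h ▸ w.2)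
  let M : W → Matrix (Fin m) (Fin n) D := fun w => A + vecMulVec c ((w : Fin n → D) - x)
  have hM_sub : ∀ w w' : W, M w - M w' = vecMulVec c (w - w' : Fin n → D) := by
    intro w w'
    simp only [M, vecMulVec_sub]
    abel
  have hM_inj : Function.Injective M := fun w w' h => by
    obtain ⟨i, hi⟩ := Function.ne_iff.mp hc0
    have hrow : c i • (w - w' : Fin n → D) = 0 := by
      rw [← row_vecMulVec, ← hM_sub, h, sub_self]; rfl
    exact Subtype.ext (sub_eq_zero.mp ((smul_eq_zero.mp hrow).resolve_left hi))
  refine ⟨Set.range M, ?_, ?_, ?_⟩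
  · rintro _ ⟨w, rfl⟩ _ ⟨w', rfl⟩ hne
    rw [Adjacent, hM_sub]
    exact rowRank_vecMulVec hc0 (sub_ne_zero.mpr (Subtype.coe_injective.ne (hne ∘ congrArg M)))
  · rw [Set.ncard_range_of_injective hM_inj, Module.natCard_eq_pow_finrank (K := D), hW,
      Nat.card_eq_fintype_card]
  · rintro _ ⟨w, rfl⟩
    refine ⟨rowRank_add_vecMulVec_sub_of_mem hA hW hx hc0 hc w.2, ?_⟩
    rw [Adjacent, add_sub_cancel_left]
    exact rowRank_vecMulVec hc0 (sub_ne_zero.mpr (hx_ne w))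

end

theorem stmt16_general {F : Type*} [Field F] [Fintype F] (m n : ℕ)
    (A : Matrix (Fin m) (Fin n) F) (r : ℕ) (hr : 2 ≤ r) (hA : rowRank A = r) :
    ∃ V : Set (Matrix (Fin m) (Fin n) F),
      IsAdjacentSet V ∧ V.ncard = Fintype.card F ^ (r - 1) ∧
      ∀ M ∈ V, rowRank M = r - 1 ∧ Adjacent M A :=
  exists_adjacentSet_of_rowRank_eq_succ (hA.trans (Nat.succ_pred_eq_of_pos (by omega)).symm)

/-- Lemma 4.1. -/
theorem stmt16 {F : Type*} [Field F] [Fintype F] (m n : ℕ) (hm : 0 < m) (hn : 0 < n)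
    (A : Matrix (Fin m) (Fin n) F) (r : ℕ) (hr : 2 ≤ r) (hA : rowRank A = r) :
    ∃ V : Set (Matrix (Fin m) (Fin n) F),
      IsAdjacentSet V ∧ V.ncard = Fintype.card F ^ (r - 1) ∧
      ∀ M ∈ V, rowRank M = r - 1 ∧ Adjacent M A :=
  stmt16_general m n A r hr hA
end

section
/- Let m, n, p, q be positive integers, F be a finite field, and φ : M_{m×n}(F) → M_{p×q}(F) be a degenerate adjacency preserver such that φ(0) = 0. Then φ(M) has rank at most 1 for every M ∈ M_{m×n}(F). -/
open Matrix

variable {D : Type*} [DivisionRing D]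

/-!
Degeneracy at `A` says that `φ` maps the star `A + M^{≤1}` into `φ A + (R(y) ∪ L(x))`. The lines
`A + ᵗu Fⁿ` and `A + ᵗFᵐ v` are adjacent sets, hence so are their images, and an adjacent set inside
`R(y) ∪ L(x)` lies in one of the two pencils. Since `φ` is injective on lines while
`L(x) ∩ R(y) = F ᵗx y` has only `|F|` points, counting over the finite field shows (for `n ≥ 2`)
that each star is mapped into a single pencil, and that a star mapped into `L(x)` forces the stars
of all adjacent matrices into the same `L(x)`. Every matrix is a sum of rank-one matrices and
`φ 0 = 0`, so all values of `φ` lie in `L(x)` and have rank at most one. The case `R(y)` is the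
same argument for `M ↦ φ(Mᵀ)ᵀ`, and when `m` or `n` is `1` degeneracy at `0` already suffices.
-/

section RankOne

variable {F : Type*} [Field F] {m n : ℕ}

theorem rowRank_eq_rank (A : Matrix (Fin m) (Fin n) F) : rowRank A = A.rank :=
  A.rank_eq_finrank_span_row.symm

theorem rowRank_transpose (A : Matrix (Fin m) (Fin n) F) : rowRank Aᵀ = rowRank A := by
  rw [rowRank_eq_rank, rowRank_eq_rank, rank_transpose]

theorem rowRank_eq_zero_iff {A : Matrix (Fin m) (Fin n) F} : rowRank A = 0 ↔ A = 0 := by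
  rw [rowRank, Submodule.finrank_eq_zero, Submodule.span_eq_bot, Set.forall_mem_range]
  exact ⟨funext, fun h i => congrFun h i⟩

theorem rowRank_le_one_iff {A : Matrix (Fin m) (Fin n) F} :
    rowRank A ≤ 1 ↔ ∃ u v, A = vecMulVec u v := by
  constructor
  · intro h
    obtain ⟨v, hv⟩ := (Submodule.finrank_le_one_iff_isPrincipal _).mp h
    have hrow (i : Fin m) : ∃ c : F, c • v = A i := by
      rw [← Submodule.mem_span_singleton, ← hv]
      exact Submodule.subset_span ⟨i, rfl⟩
    choose u hu using hrow
    exact ⟨u, v, by ext i j; simp [← hu, vecMulVec_apply]⟩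
  · rintro ⟨u, v, rfl⟩
    exact (rowRank_eq_rank _).trans_le (rank_vecMulVec_le u v)

theorem rowRank_vecMulVec_le (u : Fin m → F) (v : Fin n → F) : rowRank (vecMulVec u v) ≤ 1 :=
  rowRank_le_one_iff.mpr ⟨u, v, rfl⟩

theorem adjacent_iff {A B : Matrix (Fin m) (Fin n) F} :
    Adjacent A B ↔ A ≠ B ∧ rowRank (A - B) ≤ 1 := by
  rw [Adjacent, Nat.eq_iff_le_and_ge, Nat.one_le_iff_ne_zero, ne_eq, rowRank_eq_zero_iff,
    sub_eq_zero, and_comm]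

theorem Adjacent.ne {A B : Matrix (Fin m) (Fin n) F} (h : Adjacent A B) : A ≠ B :=
  (adjacent_iff.mp h).1

theorem Adjacent.transpose {A B : Matrix (Fin m) (Fin n) F} (h : Adjacent A B) :
    Adjacent Aᵀ Bᵀ := by
  rwa [Adjacent, ← transpose_sub, rowRank_transpose]

end RankOne

theorem exists_eq_mul_of_forall_mul_eq_mul {F ι : Type*} [Field F] {x a : ι → F} (hx : x ≠ 0)
    (h : ∀ i k, a i * x k = a k * x i) : ∃ c : F, ∀ i, a i = c * x i := by
  obtain ⟨k, hk⟩ := Function.ne_iff.mp hx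
  exact ⟨a k / x k, fun i => by rw [div_mul_eq_mul_div, eq_div_iff hk, h i k]⟩

theorem two_mul_lt_pow_add_one {k n : ℕ} (hk : 2 ≤ k) (hn : 2 ≤ n) : 2 * k < k ^ n + 1 := by
  have : k ^ 2 ≤ k ^ n := Nat.pow_le_pow_right (by omega) hn
  nlinarith

section Pencils

variable {F : Type*} [Field F] {p q : ℕ} {x : Fin p → F} {y : Fin q → F}

theorem zero_mem_Lvec (x : Fin p → F) : (0 : Matrix (Fin p) (Fin q) F) ∈ Lvec x :=
  ⟨0, fun _ _ => by simp⟩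

theorem zero_mem_Rvec (y : Fin q → F) : (0 : Matrix (Fin p) (Fin q) F) ∈ Rvec y :=
  ⟨0, fun _ _ => by simp⟩

theorem add_mem_Lvec {X Y : Matrix (Fin p) (Fin q) F} (hX : X ∈ Lvec x) (hY : Y ∈ Lvec x) :
    X + Y ∈ Lvec x := by
  obtain ⟨v, hv⟩ := hX
  obtain ⟨w, hw⟩ := hY
  exact ⟨v + w, fun i j => by simp [hv, hw, mul_add]⟩

theorem sub_mem_Lvec {X Y : Matrix (Fin p) (Fin q) F} (hX : X ∈ Lvec x) (hY : Y ∈ Lvec x) :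
    X - Y ∈ Lvec x := by
  obtain ⟨v, hv⟩ := hX
  obtain ⟨w, hw⟩ := hY
  exact ⟨v - w, fun i j => by simp [hv, hw, mul_sub]⟩

theorem rowRank_le_one_of_mem_Lvec {X : Matrix (Fin p) (Fin q) F} (hX : X ∈ Lvec x) :
    rowRank X ≤ 1 := by
  obtain ⟨v, hv⟩ := hX
  exact rowRank_le_one_iff.mpr ⟨x, v, Matrix.ext hv⟩

theorem rowRank_le_one_of_mem_Rvec {X : Matrix (Fin p) (Fin q) F} (hX : X ∈ Rvec y) :
    rowRank X ≤ 1 := by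
  obtain ⟨u, hu⟩ := hX
  exact rowRank_le_one_iff.mpr ⟨u, y, Matrix.ext hu⟩

theorem transpose_mem_Lvec {X : Matrix (Fin p) (Fin q) F} (hX : X ∈ Rvec y) : Xᵀ ∈ Lvec y := by
  obtain ⟨u, hu⟩ := hX
  exact ⟨u, fun j i => (hu i j).trans (mul_comm _ _)⟩

theorem transpose_mem_Rvec {X : Matrix (Fin p) (Fin q) F} (hX : X ∈ Lvec x) : Xᵀ ∈ Rvec x := by
  obtain ⟨v, hv⟩ := hX
  exact ⟨v, fun j i => (hv i j).trans (mul_comm _ _)⟩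

theorem Lvec_inter_Rvec_subset (hx : x ≠ 0) (y : Fin q → F) :
    Lvec x ∩ Rvec y ⊆ Set.range fun c : F => c • vecMulVec x y := by
  rintro X ⟨⟨v, hv⟩, ⟨u, hu⟩⟩
  obtain ⟨c, hc⟩ : ∃ c : F, ∀ j, v j = c * y j := by
    obtain ⟨k, hk⟩ := Function.ne_iff.mp hx
    exact ⟨u k / x k, fun j => by rw [div_mul_eq_mul_div, eq_div_iff hk, mul_comm, ← hv, hu]⟩
  exact ⟨c, Matrix.ext fun i j => by simp [hv, hc, vecMulVec_apply, mul_left_comm]⟩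

theorem Lvec_subset_Lvec_of_mem {x' : Fin p → F} {X : Matrix (Fin p) (Fin q) F}
    (hX : X ∈ Lvec x) (hX' : X ∈ Lvec x') (hX0 : X ≠ 0) :
    (Lvec x' : Set (Matrix (Fin p) (Fin q) F)) ⊆ Lvec x := by
  obtain ⟨v, hv⟩ := hX
  obtain ⟨v', hv'⟩ := hX'
  obtain ⟨i, j, hij⟩ : ∃ i j, X i j ≠ 0 := by
    by_contra! h
    exact hX0 (Matrix.ext h)
  have hj : v' j ≠ 0 := right_ne_zero_of_mul (hv' i j ▸ hij)
  rintro W ⟨w, hw⟩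
  refine ⟨(v j / v' j) • w, fun k l => ?_⟩
  have hk : x' k * v' j = x k * v j := by rw [← hv, ← hv']
  simp only [hw, Pi.smul_apply, smul_eq_mul]
  field_simp
  linear_combination w l * hk

theorem mem_Lvec_or_mem_Rvec_of_rowRank_sub_le_one (hx : x ≠ 0) (hy : y ≠ 0)
    {X Y : Matrix (Fin p) (Fin q) F} (hX : X ∈ Rvec y) (hY : Y ∈ Lvec x)
    (h : rowRank (X - Y) ≤ 1) : X ∈ Lvec x ∨ Y ∈ Rvec y := by
  obtain ⟨a, ha⟩ := hX
  obtain ⟨b, hb⟩ := hY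
  obtain ⟨c, d, hcd⟩ := rowRank_le_one_iff.mp h
  have e (i j) : a i * y j - x i * b j = c i * d j := by
    rw [← ha, ← hb]
    exact congrFun (congrFun hcd i) j
  -- the 2 × 2 minors of `X - Y = a yᵀ - x bᵀ` factor, and those of `c dᵀ` vanish
  have minor (i k j l) : (a i * x k - a k * x i) * (b j * y l - b l * y j) = 0 := by
    calc _ = (a i * y j - x i * b j) * (a k * y l - x k * b l)
          - (a i * y l - x i * b l) * (a k * y j - x k * b j) := by ring
      _ = 0 := by rw [e, e, e, e]; ring
  by_contra! hXY
  obtain ⟨i, k, hik⟩ : ∃ i k, a i * x k ≠ a k * x i := by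
    by_contra! hax
    obtain ⟨t, ht⟩ := exists_eq_mul_of_forall_mul_eq_mul hx hax
    exact hXY.1 ⟨t • y, fun i j => by simp [ha, ht, mul_left_comm, mul_assoc]⟩
  obtain ⟨j, l, hjl⟩ : ∃ j l, b j * y l ≠ b l * y j := by
    by_contra! hby
    obtain ⟨t, ht⟩ := exists_eq_mul_of_forall_mul_eq_mul hy hby
    exact hXY.2 ⟨t • x, fun i j => by simp [hb, ht, mul_left_comm, mul_comm]⟩
  exact mul_ne_zero (sub_ne_zero.mpr hik) (sub_ne_zero.mpr hjl) (minor i k j l)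

theorem IsAdjacentSet.subset_Lvec_or_subset_Rvec {T : Set (Matrix (Fin p) (Fin q) F)}
    (hT : IsAdjacentSet T) (hx : x ≠ 0) (hy : y ≠ 0) (hTxy : T ⊆ Rvec y ∪ Lvec x) :
    T ⊆ Lvec x ∨ T ⊆ Rvec y := by
  by_contra! h
  obtain ⟨⟨X, hXT, hXL⟩, ⟨Y, hYT, hYR⟩⟩ := And.imp Set.not_subset.mp Set.not_subset.mp h
  have hXR : X ∈ Rvec y := (hTxy hXT).resolve_right hXL
  have hYL : Y ∈ Lvec x := (hTxy hYT).resolve_left hYR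
  have hXY : X ≠ Y := fun hXY => hXL (hXY ▸ hYL)
  have hrank := (adjacent_iff.mp (hT X hXT Y hYT hXY)).2
  exact (mem_Lvec_or_mem_Rvec_of_rowRank_sub_le_one hx hy hXR hYL hrank).elim hXL hYR

theorem card_le_of_injOn_Lvec_inter_Rvec [Fintype F] {ι : Type*} {s : Finset ι}
    {g : ι → Matrix (Fin p) (Fin q) F} (hx : x ≠ 0) (hg : Set.InjOn g s)
    (hgs : ∀ b ∈ s, g b ∈ Lvec x ∩ Rvec y) : s.card ≤ Fintype.card F := by
  classical
  calc s.card ≤ (Finset.univ.image fun c : F => c • vecMulVec x y).card :=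
        Finset.card_le_card_of_injOn g
          (fun b hb => by simpa using Lvec_inter_Rvec_subset hx y (hgs b hb)) hg
    _ ≤ Fintype.card F := Finset.card_image_le

end Pencils

section Lines

variable {F : Type*} [Field F] {m n : ℕ}

@[simp]
theorem vecMulVec_zero_right {ι κ α : Type*} [MulZeroClass α] (u : ι → α) :
    vecMulVec u (0 : κ → α) = 0 := by
  ext
  simp [vecMulVec_apply]

theorem isAdjacentSet_range_add_vecMulVec_left (A : Matrix (Fin m) (Fin n) F) (u : Fin m → F) :
    IsAdjacentSet (Set.range fun b => A + vecMulVec u b) := by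
  rintro _ ⟨b, rfl⟩ _ ⟨b', rfl⟩ hne
  refine adjacent_iff.mpr ⟨hne, ?_⟩
  rw [add_sub_add_left_eq_sub, ← vecMulVec_sub]
  exact rowRank_vecMulVec_le _ _

theorem isAdjacentSet_range_add_vecMulVec_right (A : Matrix (Fin m) (Fin n) F) (v : Fin n → F) :
    IsAdjacentSet (Set.range fun w => A + vecMulVec w v) := by
  rintro _ ⟨w, rfl⟩ _ ⟨w', rfl⟩ hne
  refine adjacent_iff.mpr ⟨hne, ?_⟩
  rw [add_sub_add_left_eq_sub, ← sub_vecMulVec]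
  exact rowRank_vecMulVec_le _ _

theorem add_vecMulVec_injective (A : Matrix (Fin m) (Fin n) F) {u : Fin m → F} (hu : u ≠ 0) :
    Function.Injective fun b => A + vecMulVec u b := by
  obtain ⟨i, hi⟩ := Function.ne_iff.mp hu
  intro b b' h
  funext j
  exact mul_left_cancel₀ hi (add_left_cancel (congrFun (congrFun h i) j))

theorem IsAdjacentSet.rowRank_sub_le_one {S : Set (Matrix (Fin m) (Fin n) F)}
    (hS : IsAdjacentSet S) {A B : Matrix (Fin m) (Fin n) F} (hA : A ∈ S) (hB : B ∈ S) :
    rowRank (B - A) ≤ 1 := by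
  rcases eq_or_ne B A with rfl | hne
  · simp [rowRank_eq_zero_iff.mpr]
  · exact (adjacent_iff.mp (hS B hB A hA hne)).2

theorem closure_setOf_rowRank_le_one :
    AddSubmonoid.closure {N : Matrix (Fin m) (Fin n) F | rowRank N ≤ 1} = ⊤ := by
  refine eq_top_iff.mpr fun M _ => ?_
  rw [matrix_eq_sum_single M]
  refine sum_mem fun i _ => sum_mem fun j _ => AddSubmonoid.subset_closure ?_
  refine rowRank_le_one_iff.mpr ⟨Pi.single i (M i j), Pi.single j 1, ?_⟩
  ext k l
  simp only [single_apply, vecMulVec_apply, Pi.single_apply, @eq_comm _ k, @eq_comm _ l]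
  split_ifs <;> simp_all

end Lines

section Preservers

variable {m n p q : ℕ}

def PreservesAdjacency (φ : Matrix (Fin m) (Fin n) D → Matrix (Fin p) (Fin q) D) : Prop :=
  ∀ A B, Adjacent A B → Adjacent (φ A) (φ B)

/-- `φ` maps the star `A + M^{≤1}` of `A` into `φ A + S`. -/
def MapsStarInto (φ : Matrix (Fin m) (Fin n) D → Matrix (Fin p) (Fin q) D)
    (A : Matrix (Fin m) (Fin n) D) (S : Set (Matrix (Fin p) (Fin q) D)) : Prop :=
  ∀ N, rowRank N ≤ 1 → φ (A + N) - φ A ∈ S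

end Preservers

namespace PreservesAdjacency

variable {F : Type*} [Field F] {m n p q : ℕ} {φ : Matrix (Fin m) (Fin n) F → Matrix (Fin p) (Fin q) F}
  {A : Matrix (Fin m) (Fin n) F} {x : Fin p → F} {y : Fin q → F}

theorem injOn (hφ : PreservesAdjacency φ) {S : Set (Matrix (Fin m) (Fin n) F)}
    (hS : IsAdjacentSet S) : Set.InjOn φ S :=
  fun A hA B hB h => by_contra fun hne => (hφ A B (hS A hA B hB hne)).ne h

theorem injective_sub_add_vecMulVec (hφ : PreservesAdjacency φ) (A : Matrix (Fin m) (Fin n) F)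
    {u : Fin m → F} (hu : u ≠ 0) (C : Matrix (Fin p) (Fin q) F) :
    Function.Injective fun b => φ (A + vecMulVec u b) - C := fun b b' h =>
  add_vecMulVec_injective A hu <|
    hφ.injOn (isAdjacentSet_range_add_vecMulVec_left A u) ⟨b, rfl⟩ ⟨b', rfl⟩ (sub_left_injective h)

theorem isAdjacentSet_image_sub (hφ : PreservesAdjacency φ) {S : Set (Matrix (Fin m) (Fin n) F)}
    (hS : IsAdjacentSet S) (C : Matrix (Fin p) (Fin q) F) :
    IsAdjacentSet ((fun B => φ B - C) '' S) := by
  rintro _ ⟨B, hB, rfl⟩ _ ⟨B', hB', rfl⟩ hne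
  have hBB' : B ≠ B' := by rintro rfl; exact hne rfl
  rw [Adjacent, sub_sub_sub_cancel_right]
  exact hφ B B' (hS B hB B' hB' hBB')

theorem forall_sub_mem_Lvec_or_Rvec (hφ : PreservesAdjacency φ) (hx : x ≠ 0) (hy : y ≠ 0)
    (hA : MapsStarInto φ A (Rvec y ∪ Lvec x)) {S : Set (Matrix (Fin m) (Fin n) F)}
    (hS : IsAdjacentSet S) (hAS : A ∈ S) :
    (∀ B ∈ S, φ B - φ A ∈ Lvec x) ∨ (∀ B ∈ S, φ B - φ A ∈ Rvec y) := by
  have hsub : (fun B => φ B - φ A) '' S ⊆ Rvec y ∪ Lvec x := by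
    rintro _ ⟨B, hB, rfl⟩
    simpa using hA (B - A) (hS.rowRank_sub_le_one hAS hB)
  simpa only [Set.subset_def, Set.forall_mem_image] using
    (hφ.isAdjacentSet_image_sub hS (φ A)).subset_Lvec_or_subset_Rvec hx hy hsub

theorem forall_add_vecMulVec_left_mem_Lvec_or_Rvec (hφ : PreservesAdjacency φ) (hx : x ≠ 0)
    (hy : y ≠ 0) (hA : MapsStarInto φ A (Rvec y ∪ Lvec x)) (u : Fin m → F) :
    (∀ b, φ (A + vecMulVec u b) - φ A ∈ Lvec x) ∨
      (∀ b, φ (A + vecMulVec u b) - φ A ∈ Rvec y) := by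
  simpa only [Set.forall_mem_range] using hφ.forall_sub_mem_Lvec_or_Rvec hx hy hA
    (isAdjacentSet_range_add_vecMulVec_left A u) ⟨0, by simp⟩

theorem forall_add_vecMulVec_right_mem_Lvec_or_Rvec (hφ : PreservesAdjacency φ) (hx : x ≠ 0)
    (hy : y ≠ 0) (hA : MapsStarInto φ A (Rvec y ∪ Lvec x)) (v : Fin n → F) :
    (∀ w, φ (A + vecMulVec w v) - φ A ∈ Lvec x) ∨
      (∀ w, φ (A + vecMulVec w v) - φ A ∈ Rvec y) := by
  simpa only [Set.forall_mem_range] using hφ.forall_sub_mem_Lvec_or_Rvec hx hy hA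
    (isAdjacentSet_range_add_vecMulVec_right A v) ⟨0, by simp⟩

variable [Fintype F]

/-- Each row line through `A` goes to `L(x)` or to `R(y)`, where it meets the image of the
column line of `u₂` or `u₁` in `L(x) ∩ R(y) = F ᵗx y`; injectivity on column lines then gives
`|F|ⁿ ≤ 2|F| - 1`. -/
theorem false_of_add_vecMulVec_mem_Lvec_of_mem_Rvec (hφ : PreservesAdjacency φ) (hn : 2 ≤ n)
    (hx : x ≠ 0) (hy : y ≠ 0) (hA : MapsStarInto φ A (Rvec y ∪ Lvec x))
    {u₁ u₂ : Fin m → F} (hu₁ : u₁ ≠ 0) (hu₂ : u₂ ≠ 0)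
    (hL : ∀ b, φ (A + vecMulVec u₁ b) - φ A ∈ Lvec x)
    (hR : ∀ b, φ (A + vecMulVec u₂ b) - φ A ∈ Rvec y) : False := by
  classical
  let BL := Finset.univ.filter fun b => ∀ w, φ (A + vecMulVec w b) - φ A ∈ Lvec x
  let BR := Finset.univ.filter fun b => ∀ w, φ (A + vecMulVec w b) - φ A ∈ Rvec y
  have hcover : BL ∪ BR = Finset.univ := by
    ext b
    simpa [BL, BR] using hφ.forall_add_vecMulVec_right_mem_Lvec_or_Rvec hx hy hA b
  have hzero : 0 ∈ BL ∩ BR := by simp [BL, BR, zero_mem_Lvec, zero_mem_Rvec]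
  have hBL : BL.card ≤ Fintype.card F :=
    card_le_of_injOn_Lvec_inter_Rvec hx (hφ.injective_sub_add_vecMulVec A hu₂ _).injOn
      fun b hb => ⟨(Finset.mem_filter.mp hb).2 u₂, hR b⟩
  have hBR : BR.card ≤ Fintype.card F :=
    card_le_of_injOn_Lvec_inter_Rvec hx (hφ.injective_sub_add_vecMulVec A hu₁ _).injOn
      fun b hb => ⟨hL b, (Finset.mem_filter.mp hb).2 u₁⟩
  have hcard := Finset.card_union_add_card_inter BL BR
  rw [hcover, Finset.card_univ, Fintype.card_fun, Fintype.card_fin] at hcard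
  have := Finset.card_pos.mpr ⟨0, hzero⟩
  have := two_mul_lt_pow_add_one (Fintype.one_lt_card (α := F)) hn
  omega

theorem mapsStarInto_Lvec_or_Rvec (hφ : PreservesAdjacency φ) (hn : 2 ≤ n) (hx : x ≠ 0)
    (hy : y ≠ 0) (hA : MapsStarInto φ A (Rvec y ∪ Lvec x)) :
    MapsStarInto φ A (Lvec x) ∨ MapsStarInto φ A (Rvec y) := by
  have hcol := hφ.forall_add_vecMulVec_left_mem_Lvec_or_Rvec hx hy hA
  by_cases hL : ∀ u b, φ (A + vecMulVec u b) - φ A ∈ Lvec x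
  · left
    intro N hN
    obtain ⟨u, b, rfl⟩ := rowRank_le_one_iff.mp hN
    exact hL u b
  · right
    push Not at hL
    obtain ⟨u₂, b₂, hb₂⟩ := hL
    have hu₂ : u₂ ≠ 0 := by
      rintro rfl
      simp [zero_mem_Lvec] at hb₂
    have hR₂ := (hcol u₂).resolve_left fun h => hb₂ (h b₂)
    intro N hN
    obtain ⟨u, b, rfl⟩ := rowRank_le_one_iff.mp hN
    rcases eq_or_ne u 0 with rfl | hu
    · simp [zero_mem_Rvec]
    · exact ((hcol u).resolve_left fun hL₁ =>
        hφ.false_of_add_vecMulVec_mem_Lvec_of_mem_Rvec hn hx hy hA hu hu₂ hL₁ hR₂) b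

/-- At `B = A + ᵗu v` the star is mapped into some `L(x')` or `R(y')`. The column line
`A + ᵗu Fⁿ` goes injectively into `φ B + L(x)`, which rules out `R(y')` by counting and forces
`L(x') = L(x)`. -/
theorem mapsStarInto_Lvec_add (hφ : PreservesAdjacency φ) (hdeg : Degenerate φ) (hn : 2 ≤ n)
    (hx : x ≠ 0) {N : Matrix (Fin m) (Fin n) F} (hA : MapsStarInto φ A (Lvec x))
    (hN : rowRank N ≤ 1) : MapsStarInto φ (A + N) (Lvec x) := by
  obtain ⟨u, v, rfl⟩ := rowRank_le_one_iff.mp hN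
  rcases eq_or_ne u 0 with rfl | hu
  · simpa using hA
  set B := A + vecMulVec u v with hB
  have shift (b : Fin n → F) : A + vecMulVec u b = B + vecMulVec u (b - v) := by
    rw [hB, vecMulVec_sub, add_add_sub_cancel]
  have hLx (b : Fin n → F) : φ (A + vecMulVec u b) - φ B ∈ Lvec x := by
    rw [← sub_sub_sub_cancel_right _ _ (φ A)]
    exact sub_mem_Lvec (hA _ (rowRank_vecMulVec_le u b)) (hA _ (rowRank_vecMulVec_le u v))
  have hinj := hφ.injective_sub_add_vecMulVec A hu (φ B)
  obtain ⟨x', hx', y', hy', hB⟩ := hdeg B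
  rcases hφ.mapsStarInto_Lvec_or_Rvec hn hx' hy' hB with hBL | hBR
  · have : Nonempty (Fin n) := ⟨⟨0, by omega⟩⟩
    obtain ⟨b, hb⟩ := exists_ne v
    have hX' : φ (A + vecMulVec u b) - φ B ∈ Lvec x' :=
      shift b ▸ hBL _ (rowRank_vecMulVec_le _ _)
    have hX0 : φ (A + vecMulVec u b) - φ B ≠ 0 := fun h =>
      hb (hinj (h.trans (sub_self (φ B)).symm))
    exact fun N hN => Lvec_subset_Lvec_of_mem (hLx b) hX' hX0 (hBL N hN)
  · have hcard := card_le_of_injOn_Lvec_inter_Rvec hx hinj.injOn (s := Finset.univ)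
      fun b _ => ⟨hLx b, shift b ▸ hBR _ (rowRank_vecMulVec_le _ _)⟩
    rw [Finset.card_univ, Fintype.card_fun, Fintype.card_fin] at hcard
    have hF : 2 ≤ Fintype.card F := Fintype.one_lt_card
    have := two_mul_lt_pow_add_one hF hn
    omega

theorem forall_mem_Lvec (hφ : PreservesAdjacency φ) (hdeg : Degenerate φ) (hn : 2 ≤ n)
    (hx : x ≠ 0) (h0 : φ 0 = 0) (hstar : MapsStarInto φ 0 (Lvec x))
    (M : Matrix (Fin m) (Fin n) F) : φ M ∈ Lvec x := by
  have hM : M ∈ AddSubmonoid.closure {N | rowRank N ≤ 1} := by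
    rw [closure_setOf_rowRank_le_one]
    trivial
  suffices MapsStarInto φ M (Lvec x) ∧ φ M ∈ Lvec x from this.2
  induction hM using AddSubmonoid.closure_induction_left with
  | zero => exact ⟨hstar, h0 ▸ zero_mem_Lvec x⟩
  | add_left N hN A _ ih =>
    rw [add_comm]
    refine ⟨hφ.mapsStarInto_Lvec_add hdeg hn hx ih.1 hN, ?_⟩
    simpa using add_mem_Lvec ih.2 (ih.1 N hN)

end PreservesAdjacency

section Transpose

variable {F : Type*} [Field F] {m n p q : ℕ}
  {φ : Matrix (Fin m) (Fin n) F → Matrix (Fin p) (Fin q) F}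

theorem PreservesAdjacency.transpose (hφ : PreservesAdjacency φ) :
    PreservesAdjacency fun M : Matrix (Fin n) (Fin m) F => (φ Mᵀ)ᵀ :=
  fun _ _ h => (hφ _ _ h.transpose).transpose

theorem MapsStarInto.transpose {A : Matrix (Fin m) (Fin n) F}
    {S : Set (Matrix (Fin p) (Fin q) F)} {T : Set (Matrix (Fin q) (Fin p) F)}
    (h : MapsStarInto φ A S) (hST : ∀ X ∈ S, Xᵀ ∈ T) :
    MapsStarInto (fun M => (φ Mᵀ)ᵀ) Aᵀ T := by
  intro N hN
  simpa using hST _ (h Nᵀ (by rwa [rowRank_transpose]))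

theorem Degenerate.transpose (h : Degenerate φ) : Degenerate fun M => (φ Mᵀ)ᵀ := by
  intro A
  obtain ⟨x, hx, y, hy, hA⟩ := h Aᵀ
  refine ⟨y, hy, x, hx, ?_⟩
  have := MapsStarInto.transpose (T := Rvec x ∪ Lvec y) hA fun X hX =>
    hX.elim (Or.inr ∘ transpose_mem_Lvec) (Or.inl ∘ transpose_mem_Rvec)
  rwa [transpose_transpose] at this

end Transpose

theorem stmt19_general {F : Type*} [Field F] [Fintype F] (m n p q : ℕ)
    (φ : Matrix (Fin m) (Fin n) F → Matrix (Fin p) (Fin q) F)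
    (hφ : ∀ A B, Adjacent A B → Adjacent (φ A) (φ B))
    (hdeg : Degenerate φ) (h0 : φ 0 = 0) :
    ∀ M : Matrix (Fin m) (Fin n) F, rowRank (φ M) ≤ 1 := by
  intro M
  obtain ⟨x, hx, y, hy, hstar⟩ := hdeg 0
  by_cases hmn : 2 ≤ m ∧ 2 ≤ n
  · rcases PreservesAdjacency.mapsStarInto_Lvec_or_Rvec hφ hmn.2 hx hy hstar with hL | hR
    · exact rowRank_le_one_of_mem_Lvec
        (PreservesAdjacency.forall_mem_Lvec hφ hdeg hmn.2 hx h0 hL M)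
    · have hψ := PreservesAdjacency.forall_mem_Lvec (PreservesAdjacency.transpose hφ)
        hdeg.transpose hmn.1 hy (by simp [h0])
        (by simpa using hR.transpose fun _ => transpose_mem_Lvec) Mᵀ
      simpa [rowRank_transpose] using rowRank_le_one_of_mem_Lvec hψ
  · have hM : rowRank M ≤ 1 := by
      have := M.rank_le_height
      have := M.rank_le_width
      rw [rowRank_eq_rank]
      omega
    simpa [h0] using (hstar M hM).elim rowRank_le_one_of_mem_Rvec rowRank_le_one_of_mem_Lvec

/-- Proposition 4.4. -/
theorem stmt19 {F : Type*} [Field F] [Fintype F] (m n p q : ℕ) (hm : 0 < m)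
    (hn : 0 < n) (hp : 0 < p) (hq : 0 < q)
    (φ : Matrix (Fin m) (Fin n) F → Matrix (Fin p) (Fin q) F)
    (hφ : ∀ A B, Adjacent A B → Adjacent (φ A) (φ B))
    (hdeg : Degenerate φ) (h0 : φ 0 = 0) :
    ∀ M : Matrix (Fin m) (Fin n) F, rowRank (φ M) ≤ 1 :=
  stmt19_general m n p q φ hφ hdeg h0
end
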